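/- For ν = λ + 1, the scalar operator D̃f(x) = (2λ−1)·(∂f/∂y)(x,0) (i.e., the Gegenbauer operator C^{λ−1/2}_1 restricted to y = 0) satisfies (D̃ f^∨_λ)(x) = |x|^{−2ν}(D̃f)(−1/x) for all smooth f on ℝ² \ {(0,0)} and x ∈ ℝ \ {0}. -/

import Mathlib

noncomputable section

/-- Scalar twisted inversion: `fv` is the twisted inversion of `f` with parameter `λ` if
`fv (r cos θ, r sin θ) = r^{−2λ} f(−cos θ / r, sin θ / r)` for all `r > 0`. -/
def IsTwInvS (lam : ℂ) (f fv : ℝ × ℝ → ℂ) : Prop :=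
  ∀ r θ : ℝ, 0 < r →
    fv (r * Real.cos θ, r * Real.sin θ) =
      ((r : ℂ) ^ (-2 * lam)) * f (-Real.cos θ / r, Real.sin θ / r)

/-- Partial derivative in the `y`-direction. -/
def pdy (F : ℝ × ℝ → ℂ) : ℝ × ℝ → ℂ := fun p => fderiv ℝ F p (0, 1)

lemma fv_eq_aux (lam : ℂ) (f fv : ℝ × ℝ → ℂ) (h : IsTwInvS lam f fv)
    (p : ℝ × ℝ) (hp : p ≠ (0, 0)) :
    fv p = Complex.exp (-lam * (Real.log (p.1 ^ 2 + p.2 ^ 2) : ℂ)) *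
      f (-p.1 / (p.1 ^ 2 + p.2 ^ 2), p.2 / (p.1 ^ 2 + p.2 ^ 2)) := by
  set z : ℂ := Complex.mk p.1 p.2 with hz
  have hzre : z.re = p.1 := rfl
  have hzim : z.im = p.2 := rfl
  have hzne : z ≠ 0 := by
    intro h0
    apply hp
    have h1 : p.1 = 0 := by rw [← hzre, h0]; rfl
    have h2 : p.2 = 0 := by rw [← hzim, h0]; rfl
    exact Prod.ext h1 h2
  set r : ℝ := ‖z‖ with hr
  have hrpos : 0 < r := norm_pos_iff.mpr hzne
  have hrne : r ≠ 0 := hrpos.ne'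
  have hcos : Real.cos (Complex.arg z) = p.1 / r := by rw [Complex.cos_arg hzne, hzre]
  have hsin : Real.sin (Complex.arg z) = p.2 / r := by rw [Complex.sin_arg, hzim]
  have hr2 : r ^ 2 = p.1 ^ 2 + p.2 ^ 2 := by
    rw [hr, Complex.sq_norm, Complex.normSq_apply, hzre, hzim]; ring
  have key := h r (Complex.arg z) hrpos
  rw [hcos, hsin] at key
  have hpt : (r * (p.1 / r), r * (p.2 / r)) = p := by
    field_simp
  rw [hpt] at key
  rw [key]
  congr 1
  · -- power factor
    rw [Complex.cpow_def_of_ne_zero (by exact_mod_cast hrne)]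
    rw [← Complex.ofReal_log hrpos.le]
    congr 1
    rw [← hr2]
    have : Real.log (r ^ 2) = 2 * Real.log r := by
      rw [Real.log_pow]; push_cast; ring
    rw [this]
    push_cast
    ring
  · -- the point
    rw [← hr2]
    have e1 : -(p.1 / r) / r = -p.1 / r ^ 2 := by ring
    have e2 : p.2 / r / r = p.2 / r ^ 2 := by ring
    rw [e1, e2]

/-- For `ν = λ + 1`, the scalar operator `D̃f(x) = (2λ−1)(∂f/∂y)(x,0)` (the Gegenbauer
operator `C^{λ−1/2}_1` restricted to `y = 0`) satisfies
`(D̃ f^∨_λ)(x) = |x|^{−2ν} (D̃ f)(−1/x)`. -/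
theorem scalar_identity_nu_eq_lam_add_one (lam : ℂ) (f : ℝ × ℝ → ℂ)
    (hf : ContDiffOn ℝ (⊤ : ℕ∞) f {p : ℝ × ℝ | p ≠ (0, 0)})
    (fv : ℝ × ℝ → ℂ) (h : IsTwInvS lam f fv) :
    ∀ x : ℝ, x ≠ 0 →
      (2 * lam - 1) * pdy fv (x, 0)
        = ((|x| : ℝ) : ℂ) ^ (-2 * (lam + 1)) * ((2 * lam - 1) * pdy f (-1 / x, 0)) := by
  intro x hx
  set g : ℝ × ℝ → ℂ := fun p =>
    Complex.exp (-lam * (Real.log (p.1 ^ 2 + p.2 ^ 2) : ℂ)) *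
      f (-p.1 / (p.1 ^ 2 + p.2 ^ 2), p.2 / (p.1 ^ 2 + p.2 ^ 2)) with hg
  have hx0ne : ((x, (0 : ℝ)) : ℝ × ℝ) ≠ (0, 0) := by simp [hx]
  have hnne : x ^ 2 + (0 : ℝ) ^ 2 ≠ 0 := by simpa using pow_ne_zero 2 hx
  have hopen : {p : ℝ × ℝ | p ≠ (0, 0)} ∈ nhds ((x, (0 : ℝ)) : ℝ × ℝ) :=
    isOpen_ne.mem_nhds hx0ne
  have heq : fv =ᶠ[nhds ((x, (0 : ℝ)) : ℝ × ℝ)] g :=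
    Filter.eventuallyEq_of_mem hopen (fun p hp => fv_eq_aux lam f fv h p hp)
  -- differentiability of g at (x,0)
  have hn : DifferentiableAt ℝ (fun p : ℝ × ℝ => p.1 ^ 2 + p.2 ^ 2) (x, 0) :=
    (differentiableAt_fst.pow 2).add (differentiableAt_snd.pow 2)
  have hnpt : (fun p : ℝ × ℝ => p.1 ^ 2 + p.2 ^ 2) ((x, 0) : ℝ × ℝ) ≠ 0 := hnne
  have hlogd : DifferentiableAt ℝ (fun p : ℝ × ℝ => Real.log (p.1 ^ 2 + p.2 ^ 2)) (x, 0) :=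
    hn.log hnne
  have hA2 : DifferentiableAt ℝ
      (fun p : ℝ × ℝ => Complex.exp (-lam * (Real.log (p.1 ^ 2 + p.2 ^ 2) : ℂ))) (x, 0) := by
    have h1 : DifferentiableAt ℝ
        (fun p : ℝ × ℝ => ((Real.log (p.1 ^ 2 + p.2 ^ 2) : ℝ) : ℂ)) (x, 0) :=
      Complex.ofRealCLM.differentiableAt.comp _ hlogd
    exact (h1.const_mul (-lam)).cexp
  have hfd : DifferentiableAt ℝ f (-1 / x, 0) := by
    have hmem : ((-1 / x, (0 : ℝ)) : ℝ × ℝ) ∈ {p : ℝ × ℝ | p ≠ (0, 0)} := by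
      simp [div_ne_zero (by norm_num : (-1 : ℝ) ≠ 0) hx]
    exact ((hf.contDiffAt (isOpen_ne.mem_nhds hmem)).differentiableAt (by simp))
  have hφ0 : ((-x / (x ^ 2 + (0:ℝ) ^ 2), (0:ℝ) / (x ^ 2 + (0:ℝ) ^ 2)) : ℝ × ℝ) = (-1 / x, 0) := by
    have : -x / (x ^ 2 + (0:ℝ) ^ 2) = -1 / x := by field_simp; ring
    rw [this]; simp
  have hφ : DifferentiableAt ℝ
      (fun p : ℝ × ℝ => ((-p.1 / (p.1 ^ 2 + p.2 ^ 2), p.2 / (p.1 ^ 2 + p.2 ^ 2)) : ℝ × ℝ))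
      (x, 0) := by
    have hinv : DifferentiableAt ℝ (fun p : ℝ × ℝ => (p.1 ^ 2 + p.2 ^ 2)⁻¹) (x, 0) :=
      hn.inv hnpt
    have ha : DifferentiableAt ℝ (fun p : ℝ × ℝ => -p.1 / (p.1 ^ 2 + p.2 ^ 2)) (x, 0) := by
      simp only [div_eq_mul_inv]
      exact differentiableAt_fst.neg.mul hinv
    have hb : DifferentiableAt ℝ (fun p : ℝ × ℝ => p.2 / (p.1 ^ 2 + p.2 ^ 2)) (x, 0) := by
      simp only [div_eq_mul_inv]
      exact differentiableAt_snd.mul hinv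
    exact ha.prodMk hb
  have hcompd : DifferentiableAt ℝ
      (fun p : ℝ × ℝ => f (-p.1 / (p.1 ^ 2 + p.2 ^ 2), p.2 / (p.1 ^ 2 + p.2 ^ 2))) (x, 0) := by
    have hfd' : DifferentiableAt ℝ f
        ((-x / (x ^ 2 + (0:ℝ) ^ 2), (0:ℝ) / (x ^ 2 + (0:ℝ) ^ 2)) : ℝ × ℝ) := by
      rw [hφ0]; exact hfd
    exact DifferentiableAt.comp (x, 0) hfd' hφ
  have hgd : DifferentiableAt ℝ g (x, 0) := hA2.mul hcompd
  -- one-variable derivative computation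
  have hq : HasDerivAt (fun t : ℝ => x ^ 2 + t ^ 2) 0 0 := by
    simpa using (hasDerivAt_pow 2 (0 : ℝ)).const_add (x ^ 2)
  have hlog1 : HasDerivAt (fun t : ℝ => Real.log (x ^ 2 + t ^ 2)) 0 0 := by
    simpa using hq.log hnne
  have hA : HasDerivAt
      (fun t : ℝ => Complex.exp (-lam * (Real.log (x ^ 2 + t ^ 2) : ℂ))) 0 0 := by
    have h1 := hlog1.ofReal_comp
    have h2 := h1.const_mul (-lam)
    simpa using h2.cexp
  have hc1 : HasDerivAt (fun t : ℝ => -x / (x ^ 2 + t ^ 2)) 0 0 := by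
    simpa using (hasDerivAt_const (0:ℝ) (-x)).fun_div hq hnne
  have hc2 : HasDerivAt (fun t : ℝ => t / (x ^ 2 + t ^ 2)) ((x ^ 2)⁻¹) 0 := by
    have : HasDerivAt (fun t : ℝ => t / (x ^ 2 + t ^ 2)) _ 0 := (hasDerivAt_id (0 : ℝ)).fun_div hq hnne
    convert this using 1
    field_simp
    ring
  have hψ : HasDerivAt
      (fun t : ℝ => ((-x / (x ^ 2 + t ^ 2), t / (x ^ 2 + t ^ 2)) : ℝ × ℝ))
      (0, (x ^ 2)⁻¹) 0 := hc1.prodMk hc2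
  have hfA : HasFDerivAt f (fderiv ℝ f (-1 / x, 0))
      ((-x / (x ^ 2 + (0:ℝ) ^ 2), (0:ℝ) / (x ^ 2 + (0:ℝ) ^ 2)) : ℝ × ℝ) := by
    rw [hφ0]; exact hfd.hasFDerivAt
  have hB : HasDerivAt
      (fun t : ℝ => f (-x / (x ^ 2 + t ^ 2), t / (x ^ 2 + t ^ 2)))
      (fderiv ℝ f (-1 / x, 0) (0, (x ^ 2)⁻¹)) 0 :=
    hfA.comp_hasDerivAt 0 hψ
  have hG0 : HasDerivAt
      (fun t : ℝ => Complex.exp (-lam * (Real.log (x ^ 2 + t ^ 2) : ℂ)) *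
        f (-x / (x ^ 2 + t ^ 2), t / (x ^ 2 + t ^ 2)))
      (0 * f (-x / (x ^ 2 + (0:ℝ) ^ 2), (0:ℝ) / (x ^ 2 + (0:ℝ) ^ 2)) +
        Complex.exp (-lam * (Real.log (x ^ 2 + (0:ℝ) ^ 2) : ℂ)) *
          fderiv ℝ f (-1 / x, 0) (0, (x ^ 2)⁻¹)) 0 := hA.mul hB
  have hG : HasDerivAt (fun t : ℝ => g (x, t))
      (0 * f (-x / (x ^ 2 + (0:ℝ) ^ 2), (0:ℝ) / (x ^ 2 + (0:ℝ) ^ 2)) +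
        Complex.exp (-lam * (Real.log (x ^ 2 + (0:ℝ) ^ 2) : ℂ)) *
          fderiv ℝ f (-1 / x, 0) (0, (x ^ 2)⁻¹)) 0 := hG0
  -- relate pdy fv to the one-variable derivative
  have hline : HasDerivAt (fun t : ℝ => ((x, t) : ℝ × ℝ)) ((0 : ℝ), (1 : ℝ)) 0 :=
    (hasDerivAt_const (0 : ℝ) x).prodMk (hasDerivAt_id 0)
  have hcomp : HasDerivAt (fun t : ℝ => g (x, t)) (fderiv ℝ g (x, 0) (0, 1)) 0 :=
    hgd.hasFDerivAt.comp_hasDerivAt 0 hline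
  have hval : fderiv ℝ g (x, 0) (0, 1)
      = Complex.exp (-lam * (Real.log (x ^ 2 + (0:ℝ) ^ 2) : ℂ)) *
        fderiv ℝ f (-1 / x, 0) (0, (x ^ 2)⁻¹) := by
    have := hcomp.unique hG
    simpa using this
  have hpdy : pdy fv (x, 0)
      = Complex.exp (-lam * (Real.log (x ^ 2 + (0:ℝ) ^ 2) : ℂ)) *
        fderiv ℝ f (-1 / x, 0) (0, (x ^ 2)⁻¹) := by
    rw [pdy]
    rw [heq.fderiv_eq]
    exact hval
  -- rewrite directional derivative as scalar multiple
  have hdir : fderiv ℝ f (-1 / x, 0) (0, (x ^ 2)⁻¹)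
      = (((x ^ 2)⁻¹ : ℝ) : ℂ) * pdy f (-1 / x, 0) := by
    have hsm : ((0 : ℝ), (x ^ 2)⁻¹) = ((x ^ 2)⁻¹ : ℝ) • ((0 : ℝ), (1 : ℝ)) := by
      simp
    rw [hsm, (fderiv ℝ f (-1 / x, 0)).map_smul, pdy, Complex.real_smul]
  -- key scalar identity
  have hkey : Complex.exp (-lam * (Real.log (x ^ 2) : ℂ)) * (((x ^ 2)⁻¹ : ℝ) : ℂ)
      = ((|x| : ℝ) : ℂ) ^ (-2 * (lam + 1)) := by
    have habs : (0:ℝ) < |x| := abs_pos.mpr hx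
    have hlx : Real.log (x ^ 2) = 2 * Real.log |x| := by
      rw [show x ^ 2 = |x| ^ 2 from (sq_abs x).symm, Real.log_pow]
      push_cast; ring
    have hinv : ((x ^ 2)⁻¹ : ℝ) = Real.exp (-(2 * Real.log |x|)) := by
      rw [Real.exp_neg]
      congr 1
      rw [show (2 : ℝ) * Real.log |x| = Real.log (|x| ^ 2) by
        rw [Real.log_pow]; push_cast; ring]
      rw [Real.exp_log (by positivity), sq_abs]
    rw [Complex.cpow_def_of_ne_zero (by exact_mod_cast habs.ne'),
      ← Complex.ofReal_log habs.le, hlx, hinv, Complex.ofReal_exp, ← Complex.exp_add]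
    congr 1
    push_cast
    ring
  rw [hpdy, hdir]
  rw [show x ^ 2 + (0:ℝ) ^ 2 = x ^ 2 by ring]
  rw [← hkey]
  ring
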